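/- Let 0 < λ₂ ≤ 1/2, let j be a job, and let G be a finite set of jobs, each with relative laxity at most λ₂ (hence each 1/2-tight), with p_i ≤ p_j for all i ∈ G, and with each lifespan I(i) intersecting I(j). If G is feasible on m* machines, then ∑_{i∈G} p_i ≤ 5·m*·|I(j)|. -/

import Mathlib

open MeasureTheory Set

/-- A job with release time `r`, size `p > 0` and deadline `d`, satisfying `r + p ≤ d`. -/
structure Job where
  r : ℝ
  p : ℝ
  d : ℝ
  p_pos : 0 < p
  fits : r + p ≤ d

namespace Job

/-- The lifespan `I(j) = [r_j, d_j]` of a job. -/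
def lifespan (j : Job) : Set ℝ := Set.Icc j.r j.d

/-- The length `|I(j)| = d_j - r_j` of the lifespan of a job. -/
def len (j : Job) : ℝ := j.d - j.r

/-- The laxity `ℓ_j = d_j - r_j - p_j` of a job. -/
def laxity (j : Job) : ℝ := j.d - j.r - j.p

/-- A job is `α`-tight if `p_j ≥ α·|I(j)|`. -/
def IsTight (α : ℝ) (j : Job) : Prop := α * j.len ≤ j.p

end Job

/-- `P` is a schedule of the jobs `job j`, `j ∈ J`, on `m` machines:
each job is processed on a measurable subset of its lifespan, and at every time
at most `m` jobs are processed simultaneously. -/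
def IsSchedule {ι : Type*} (J : Finset ι) (job : ι → Job) (m : ℕ) (P : ι → Set ℝ) : Prop :=
  (∀ j ∈ J, MeasurableSet (P j)) ∧
  (∀ j ∈ J, P j ⊆ (job j).lifespan) ∧
  (∀ t : ℝ, ∀ S : Finset ι, S ⊆ J → (∀ j ∈ S, t ∈ P j) → S.card ≤ m)

/-- The jobs `job j`, `j ∈ J`, are feasible on `m` machines: there is a schedule on `m`
machines processing every job for exactly `p_j` time units. -/
def FeasibleOn {ι : Type*} (J : Finset ι) (job : ι → Job) (m : ℕ) : Prop :=
  ∃ P : ι → Set ℝ, IsSchedule J job m P ∧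
    ∀ j ∈ J, volume (P j) = ENNReal.ofReal (job j).p

/-- `T ⊆ ℝ` is a finite union of (closed) time intervals. -/
def FiniteUnionOfIntervals (T : Set ℝ) : Prop :=
  ∃ s : Finset (ℝ × ℝ), T = ⋃ q ∈ s, Set.Icc q.1 q.2

/- Each job of `G` has relative laxity at most `1/2`, so its lifespan is at most twice its size,
hence at most `2 p_j ≤ 2 |I(j)|`. A lifespan of that length meeting `I(j)` lies in `I(j)` widened by
`2 |I(j)|` on both sides, an interval of length `5 |I(j)|`; on it, at most `m*` jobs run at any time. -/

namespace Job

lemma p_le_len (j : Job) : j.p ≤ j.len := by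
  linarith [j.fits, show j.len = j.d - j.r from rfl]

lemma len_nonneg (j : Job) : 0 ≤ j.len :=
  j.p_pos.le.trans j.p_le_len

lemma isTight_one_sub_of_laxity_le {lam : ℝ} {j : Job} (h : j.laxity ≤ lam * j.len) :
    j.IsTight (1 - lam) := by
  unfold IsTight; unfold laxity at h; unfold len at *; linarith

lemma IsTight.mono {α β : ℝ} {j : Job} (hj : j.IsTight β) (hαβ : α ≤ β) : j.IsTight α :=
  (mul_le_mul_of_nonneg_right hαβ j.len_nonneg).trans hj

lemma IsTight.len_le_two_mul_p {j : Job} (hj : j.IsTight (1 / 2)) : j.len ≤ 2 * j.p := by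
  unfold IsTight at hj; linarith

lemma lifespan_subset_Icc_of_len_le {i j : Job} {c : ℝ} (hij : (i.lifespan ∩ j.lifespan).Nonempty)
    (hc : i.len ≤ c) : i.lifespan ⊆ Icc (j.r - c) (j.d + c) := by
  obtain ⟨t, ⟨hti, hti'⟩, htj, htj'⟩ := hij
  intro s ⟨hs, hs'⟩
  unfold len at hc
  constructor <;> linarith

end Job

theorem MeasureTheory.sum_measure_le_mul_measure_of_card_le {α ι : Type*} [MeasurableSpace α]
    (μ : Measure α) {G : Finset ι} {P : ι → Set α} {K : Set α} {m : ℕ}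
    (hmeas : ∀ i ∈ G, MeasurableSet (P i)) (hsub : ∀ i ∈ G, P i ⊆ K)
    (hcap : ∀ t, ∀ S ⊆ G, (∀ i ∈ S, t ∈ P i) → S.card ≤ m) :
    ∑ i ∈ G, μ (P i) ≤ m * μ K := by
  classical
  have hpoint : ∀ t, ∑ i ∈ G, (P i).indicator 1 t ≤ (m : ENNReal) * K.indicator 1 t := by
    intro t
    by_cases htK : t ∈ K
    · simp only [indicator_apply, Pi.one_apply, htK, if_true, mul_one, Finset.sum_boole]
      exact_mod_cast hcap t _ (Finset.filter_subset _ _) fun i hi => (Finset.mem_filter.mp hi).2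
    · rw [Finset.sum_eq_zero fun i hi => indicator_of_notMem (fun h => htK (hsub i hi h)) _]
      exact zero_le
  calc ∑ i ∈ G, μ (P i) = ∫⁻ t, ∑ i ∈ G, (P i).indicator 1 t ∂μ := by
        rw [lintegral_finsetSum _ fun i hi => measurable_one.indicator (hmeas i hi)]
        exact Finset.sum_congr rfl fun i hi => (lintegral_indicator_one (hmeas i hi)).symm
    _ ≤ ∫⁻ t, (m : ENNReal) * K.indicator 1 t ∂μ := lintegral_mono hpoint
    _ = m * ∫⁻ t, K.indicator 1 t ∂μ := lintegral_const_mul' _ _ (ENNReal.natCast_ne_top m)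
    _ ≤ m * μ K := by gcongr; exact lintegral_indicator_one_le K

theorem FeasibleOn.sum_p_le {ι : Type*} {J : Finset ι} {job : ι → Job} {m : ℕ}
    (hfeas : FeasibleOn J job m) {a b : ℝ} (hab : a ≤ b)
    (hJ : ∀ i ∈ J, (job i).lifespan ⊆ Icc a b) :
    ∑ i ∈ J, (job i).p ≤ m * (b - a) := by
  obtain ⟨P, ⟨hmeas, hsub, hcap⟩, hvol⟩ := hfeas
  have hvol_le : ∑ i ∈ J, volume (P i) ≤ m * volume (Icc a b) :=
    sum_measure_le_mul_measure_of_card_le volume hmeas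
      (fun i hi => (hsub i hi).trans (hJ i hi)) hcap
  rw [Finset.sum_congr rfl hvol, ← ENNReal.ofReal_sum_of_nonneg fun i _ => (job i).p_pos.le,
    Real.volume_Icc, ← ENNReal.ofReal_natCast, ← ENNReal.ofReal_mul (Nat.cast_nonneg m)] at hvol_le
  exact (ENNReal.ofReal_le_ofReal_iff (by positivity [sub_nonneg.mpr hab])).mp hvol_le

theorem total_size_G_le_general {ι : Type*} (lam₂ : ℝ) (hlam₂ : lam₂ ≤ 1 / 2)
    (j : Job) (G : Finset ι) (job : ι → Job)
    (hlax : ∀ i ∈ G, (job i).laxity ≤ lam₂ * (job i).len)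
    (hp : ∀ i ∈ G, (job i).p ≤ j.p)
    (hint : ∀ i ∈ G, ((job i).lifespan ∩ j.lifespan).Nonempty)
    (mstar : ℕ) (hfeas : FeasibleOn G job mstar) :
    ∑ i ∈ G, (job i).p ≤ 5 * mstar * j.len := by
  have hlen : ∀ i ∈ G, (job i).len ≤ 2 * j.len := fun i hi =>
    calc (job i).len ≤ 2 * (job i).p :=
          ((Job.isTight_one_sub_of_laxity_le (hlax i hi)).mono (by linarith)).len_le_two_mul_p
      _ ≤ 2 * j.len := by linarith [hp i hi, j.p_le_len]
  have hsum := hfeas.sum_p_le (by linarith [j.len_nonneg, j.fits, j.p_pos])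
    fun i hi => Job.lifespan_subset_Icc_of_len_le (hint i hi) (hlen i hi)
  have hwidth : j.d + 2 * j.len - (j.r - 2 * j.len) = 5 * j.len := by unfold Job.len; ring
  rw [hwidth] at hsum
  linarith

/-- If all jobs in `G` have relative laxity at most `λ₂ ≤ 1/2`, are no larger than `j`, have
lifespans intersecting `I(j)`, and `G` is feasible on `m*` machines, then the total size of
the jobs in `G` is at most `5·m*·|I(j)|`. -/
theorem total_size_G_le {ι : Type*} (lam₂ : ℝ) (hlam₂0 : 0 < lam₂) (hlam₂ : lam₂ ≤ 1 / 2)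
    (j : Job) (G : Finset ι) (job : ι → Job)
    (hlax : ∀ i ∈ G, (job i).laxity ≤ lam₂ * (job i).len)
    (hp : ∀ i ∈ G, (job i).p ≤ j.p)
    (hint : ∀ i ∈ G, ((job i).lifespan ∩ j.lifespan).Nonempty)
    (mstar : ℕ) (hfeas : FeasibleOn G job mstar) :
    ∑ i ∈ G, (job i).p ≤ 5 * mstar * j.len :=
  total_size_G_le_general lam₂ hlam₂ j G job hlax hp hint mstar hfeas
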